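/- arXiv:1309.6034 — 3 statements merged into one kernel-verified Lean document; each statement's English description precedes it below -/
import Mathlib

section
/- For every positive integer d divisible by 8, the hereditary discrepancy of the matrix G_d satisfies herdisc(G_d) ≥ 2^{3d/16}/(2e). -/
/-- The character `χ_v(u) = (-1)^{⟨v,u⟩₂}` of `F₂^d`, realized as
`(-1)` raised to the number of coordinates where both `v` and `u` equal `1`
(which has the parity of the `F₂` inner product `⟨v,u⟩₂`). -/
def chi {d : ℕ} (v u : Fin d → Bool) : ℝ :=
  (-1 : ℝ) ^ (Finset.univ.filter (fun i => v i = true ∧ u i = true)).card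

/-- The Hamming weight of `v ∈ {0,1}^d`. -/
def wt {d : ℕ} (v : Fin d → Bool) : ℕ :=
  (Finset.univ.filter (fun i => v i = true)).card

/-- The matrix `G_d` whose rows are the characters `χ_v` with `|v| = d/8`,
with columns indexed by `u ∈ {0,1}^d`. -/
def Gmat (d : ℕ) : Matrix {v : Fin d → Bool // wt v = d / 8} (Fin d → Bool) ℝ :=
  fun v u => chi v.1 u

/-- The discrepancy of a real matrix `A`:
`disc(A) = min_{x ∈ {-1,+1}^n} ‖Ax‖_∞`. -/
noncomputable def matDisc {m n : Type*} [Fintype m] [Fintype n]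
    (A : Matrix m n ℝ) : ℝ :=
  sInf {D : ℝ | ∃ x : n → ℝ, (∀ i, x i = 1 ∨ x i = -1) ∧
    D = ⨆ j : m, |∑ i, A j i * x i|}

/-- The hereditary discrepancy of a real matrix `A`:
`herdisc(A) = max_{W ⊆ columns} disc(A|_W)`. -/
noncomputable def matHerDisc {m n : Type*} [Fintype m] [Fintype n]
    (A : Matrix m n ℝ) : ℝ :=
  sSup {D : ℝ | ∃ W : Finset n,
    D = matDisc (A.submatrix id (fun i : {x // x ∈ W} => i.1))}

/-!
Split the `d = 8m` coordinates into `m` blocks, each a copy of `F₂³`. Picking a point `f j` in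
every block gives a row `v_f` of weight `m`; picking a linear functional `⟨g j, ·⟩₂` on every
block gives a column `u_g`, and `χ_{v_f}(u_g) = ∏ⱼ (-1)^{⟨f j, g j⟩₂}`. So `G_d` contains the
`8^m × 8^m` Sylvester–Hadamard matrix `H = H₈^{⊗m}`, with `HᵀH = 8^m I`. For every sign vector `x`
this gives `‖Hx‖₂² = 8^m · 8^m`, hence some coordinate of `Hx` has absolute value at least
`√(8^m) = 2^{3d/16}`.
-/

open Finset Matrix

namespace Matrix

variable {α β R : Type*} [CommSemiring R]

def tensorPow (K : Matrix α β R) (ι : Type*) [Fintype ι] : Matrix (ι → α) (ι → β) R :=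
  of fun f g => ∏ j, K (f j) (g j)

theorem sum_mul_eq_ite_of_transpose_mul_self_eq_smul [Fintype α] [DecidableEq β]
    {K : Matrix α β R} {c : R} (hK : Kᵀ * K = c • 1) (b b' : β) :
    ∑ a, K a b * K a b' = if b = b' then c else 0 := by
  simpa [mul_apply, one_apply] using congrFun (congrFun hK b) b'

theorem transpose_mul_self_tensorPow [Fintype α] [DecidableEq β] {K : Matrix α β R} {c : R}
    (hK : Kᵀ * K = c • 1) (ι : Type*) [Fintype ι] [DecidableEq ι] :
    (K.tensorPow ι)ᵀ * K.tensorPow ι = c ^ Fintype.card ι • 1 := by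
  ext g g'
  calc ∑ f : ι → α, (∏ j, K (f j) (g j)) * ∏ j, K (f j) (g' j)
      = ∏ j, ∑ a, K a (g j) * K a (g' j) := by
        simp only [← prod_mul_distrib, Fintype.prod_sum]
    _ = ∏ j, if g j = g' j then c else 0 := by
        simp only [sum_mul_eq_ite_of_transpose_mul_self_eq_smul hK]
    _ = (c ^ Fintype.card ι • (1 : Matrix (ι → β) (ι → β) R)) g g' := by
        by_cases h : g = g'
        · simp [h]
        · obtain ⟨j, hj⟩ := Function.ne_iff.mp h
          simpa [h] using prod_eq_zero (mem_univ j) (if_neg hj)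

theorem transpose_injective_of_transpose_mul_self_eq_smul [Fintype α] [DecidableEq β]
    {K : Matrix α β R} {c : R} (hK : Kᵀ * K = c • 1) (hc : c ≠ 0) :
    Function.Injective Kᵀ := by
  intro b b' h
  by_contra hne
  have hbb := sum_mul_eq_ite_of_transpose_mul_self_eq_smul hK b b
  have hbb' := sum_mul_eq_ite_of_transpose_mul_self_eq_smul hK b b'
  have hcol : ∀ a, K a b' = K a b := fun a => (congrFun h a).symm
  simp only [hcol] at hbb'
  rw [if_pos rfl] at hbb
  rw [if_neg hne, hbb] at hbb'
  exact hc hbb'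

end Matrix

section Discrepancy

variable {m n : Type*} [Fintype m] [Fintype n]

theorem le_matDisc {A : Matrix m n ℝ} {t : ℝ}
    (h : ∀ x : n → ℝ, (∀ i, x i = 1 ∨ x i = -1) → ∃ j, t ≤ |(A *ᵥ x) j|) :
    t ≤ matDisc A := by
  refine le_csInf ⟨_, fun _ => 1, fun _ => Or.inl rfl, rfl⟩ ?_
  rintro _ ⟨x, hx, rfl⟩
  obtain ⟨j, hj⟩ := h x hx
  exact hj.trans (le_ciSup (f := fun j => |∑ i, A j i * x i|) (Set.finite_range _).bddAbove j)

theorem matDisc_submatrix_le {m' n' : Type*} [Fintype m'] [Fintype n'] (A : Matrix m n ℝ)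
    (r : m' → m) (e : n' ≃ n) : matDisc (A.submatrix r e) ≤ matDisc A := by
  have hbdd : BddBelow {D : ℝ | ∃ x : n' → ℝ, (∀ i, x i = 1 ∨ x i = -1) ∧
      D = ⨆ j, |∑ i, A.submatrix r e j i * x i|} := by
    refine ⟨0, ?_⟩
    rintro _ ⟨x, -, rfl⟩
    exact Real.iSup_nonneg fun _ => abs_nonneg _
  refine le_csInf ⟨_, fun _ => 1, fun _ => Or.inl rfl, rfl⟩ ?_
  rintro _ ⟨x, hx, rfl⟩
  calc matDisc (A.submatrix r e) ≤ ⨆ j : m', |∑ i : n', A (r j) (e i) * x (e i)| :=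
        csInf_le hbdd ⟨x ∘ e, fun i => hx (e i), rfl⟩
    _ = ⨆ j : m', |∑ i : n, A (r j) i * x i| :=
        iSup_congr fun j => congrArg abs (Equiv.sum_comp e fun i => A (r j) i * x i)
    _ ≤ ⨆ j : m, |∑ i : n, A j i * x i| :=
        Real.iSup_le (fun j => le_ciSup (f := fun j => |∑ i, A j i * x i|)
            (Set.finite_range _).bddAbove (r j))
          (Real.iSup_nonneg fun _ => abs_nonneg _)

theorem matDisc_le_matHerDisc (A : Matrix m n ℝ) (W : Finset n) :
    matDisc (A.submatrix id (fun i : W => i.1)) ≤ matHerDisc A := by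
  refine le_csSup ((Set.finite_range fun W : Finset n =>
    matDisc (A.submatrix id (fun i : W => i.1))).bddAbove.mono ?_) ⟨W, rfl⟩
  rintro _ ⟨W, rfl⟩
  exact ⟨W, rfl⟩

theorem matDisc_submatrix_le_matHerDisc {m' n' : Type*} [Fintype m'] [Fintype n']
    (A : Matrix m n ℝ) (r : m' → m) {c : n' → n} (hc : Function.Injective c) :
    matDisc (A.submatrix r c) ≤ matHerDisc A := by
  classical
  let e : n' ≃ (Set.range c).toFinset :=
    (Equiv.ofInjective c hc).trans (Equiv.subtypeEquivRight fun _ => Set.mem_toFinset.symm)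
  calc matDisc (A.submatrix r c)
      = matDisc ((A.submatrix id (fun i : (Set.range c).toFinset => i.1)).submatrix r e) := rfl
    _ ≤ matDisc (A.submatrix id (fun i : (Set.range c).toFinset => i.1)) :=
        matDisc_submatrix_le _ r e
    _ ≤ matHerDisc A := matDisc_le_matHerDisc A _

theorem sqrt_le_matDisc_of_transpose_mul_self_eq_smul [DecidableEq n] [Nonempty n]
    {H : Matrix n n ℝ} {c : ℝ} (hH : Hᵀ * H = c • 1) : √c ≤ matDisc H := by
  refine le_matDisc fun x hx => ?_
  have hxx : x ⬝ᵥ x = Fintype.card n := by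
    have hsq : ∀ i, x i * x i = 1 := fun i => by rcases hx i with h | h <;> simp [h]
    simp [dotProduct, hsq]
  have hsum : ∑ j, (H *ᵥ x) j ^ 2 = ∑ _j : n, c := by
    calc ∑ j, (H *ᵥ x) j ^ 2 = x ⬝ᵥ ((Hᵀ * H) *ᵥ x) := by
          rw [← mulVec_mulVec, dotProduct_mulVec, vecMul_transpose]
          simp only [dotProduct, sq]
      _ = ∑ _j : n, c := by
          rw [hH, smul_mulVec, one_mulVec, dotProduct_smul, hxx]
          simp [mul_comm]
  obtain ⟨j, -, hj⟩ := exists_le_of_sum_le univ_nonempty hsum.ge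
  exact ⟨j, by simpa [Real.sqrt_sq_eq_abs] using Real.sqrt_le_sqrt hj⟩

end Discrepancy

def hadamard2 : Matrix Bool Bool ℝ :=
  of fun a b => if a && b then -1 else 1

theorem transpose_mul_self_hadamard2 : hadamard2ᵀ * hadamard2 = (2 : ℝ) • 1 := by
  ext a b
  cases a <;> cases b <;> norm_num [hadamard2, mul_apply]

theorem of_chi_eq_tensorPow (k : ℕ) :
    of (chi (d := k)) = hadamard2.tensorPow (Fin k) := by
  ext v u
  simp [chi, tensorPow, hadamard2, ← prod_filter]

theorem transpose_mul_self_of_chi (k : ℕ) :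
    (of (chi (d := k)))ᵀ * of chi = (2 : ℝ) ^ k • 1 := by
  simpa [of_chi_eq_tensorPow] using
    transpose_mul_self_tensorPow transpose_mul_self_hadamard2 (Fin k)

theorem chi_comm {d : ℕ} (v u : Fin d → Bool) : chi v u = chi u v := by
  simp only [chi, and_comm]

theorem ite_chi_eq_neg_one {d : ℕ} (v u : Fin d → Bool) :
    (if chi v u = -1 then -1 else 1 : ℝ) = chi v u := by
  rcases neg_one_pow_eq_or ℝ (univ.filter fun i => v i = true ∧ u i = true).card with h | h <;>
    norm_num [chi, h]

section Blocks

variable {d m k : ℕ} (e : Fin d ≃ Fin m × (Fin k → Bool))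

def blockRow (f : Fin m → Fin k → Bool) : Fin d → Bool :=
  fun i => decide ((e i).2 = f (e i).1)

/-- On block `j` this is the linear functional `a ↦ ⟨g j, a⟩₂`, read off from the sign
`χ_{g j}(a) = (-1)^{⟨g j, a⟩₂}`. -/
noncomputable def blockCol (g : Fin m → Fin k → Bool) : Fin d → Bool :=
  fun i => decide (chi (g (e i).1) (e i).2 = -1)

theorem wt_blockRow (f : Fin m → Fin k → Bool) : wt (blockRow e f) = m := by
  have hcount : ∑ i, (if (e i).2 = f (e i).1 then 1 else 0) = m := by
    rw [Fintype.sum_equiv e _ (fun p => if p.2 = f p.1 then 1 else 0) fun _ => rfl,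
      Fintype.sum_prod_type]
    simp [sum_ite_eq']
  rw [wt, card_filter]
  simpa only [blockRow, decide_eq_true_eq] using hcount

theorem chi_blockRow_blockCol (f g : Fin m → Fin k → Bool) :
    chi (blockRow e f) (blockCol e g) = ∏ j, chi (f j) (g j) := by
  calc chi (blockRow e f) (blockCol e g)
      = ∏ i, hadamard2 (blockRow e f i) (blockCol e g i) :=
        congrFun₂ (of_chi_eq_tensorPow d) _ _
    _ = ∏ p : Fin m × (Fin k → Bool),
          hadamard2 (decide (p.2 = f p.1)) (decide (chi (g p.1) p.2 = -1)) :=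
        Fintype.prod_equiv e _ _ fun _ => rfl
    _ = ∏ j, hadamard2 true (decide (chi (g j) (f j) = -1)) := by
        rw [Fintype.prod_prod_type]
        refine prod_congr rfl fun j _ => ?_
        rw [Fintype.prod_eq_single (f j) fun a ha => by simp [hadamard2, ha]]
        simp
    _ = ∏ j, chi (f j) (g j) := by
        simp only [hadamard2, of_apply, Bool.true_and, decide_eq_true_eq, ite_chi_eq_neg_one,
          chi_comm (g _)]

theorem blockCol_injective : Function.Injective (blockCol e) := by
  intro g g' h
  funext j
  refine transpose_injective_of_transpose_mul_self_eq_smul (transpose_mul_self_of_chi k)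
    (by positivity) (funext fun a => ?_)
  have := congrFun h (e.symm (j, a))
  simp only [blockCol, Equiv.apply_symm_apply, decide_eq_decide] at this
  change chi a (g j) = chi a (g' j)
  rw [chi_comm a, chi_comm a, ← ite_chi_eq_neg_one (g j), ← ite_chi_eq_neg_one (g' j)]
  simp only [this]

end Blocks

theorem Gmat_herdisc_lower_bound_general (d : ℕ) (h8 : 8 ∣ d) :
    (2 : ℝ) ^ (3 * (d : ℝ) / 16) / (2 * Real.exp 1) ≤ matHerDisc (Gmat d) := by
  obtain ⟨m, rfl⟩ := h8
  let e : Fin (8 * m) ≃ Fin m × (Fin 3 → Bool) := Fintype.equivOfCardEq (by simp [mul_comm])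
  have hwt (f : Fin m → Fin 3 → Bool) : wt (blockRow e f) = 8 * m / 8 := by
    rw [wt_blockRow]; omega
  have hsub : (Gmat (8 * m)).submatrix (fun f => ⟨blockRow e f, hwt f⟩) (blockCol e)
      = (of chi).tensorPow (Fin m) := by
    ext f g
    exact chi_blockRow_blockCol e f g
  have hH := transpose_mul_self_tensorPow (transpose_mul_self_of_chi 3) (Fin m)
  have hpow :
      (2 : ℝ) ^ (3 * ((8 * m : ℕ) : ℝ) / 16) = √(((2 : ℝ) ^ 3) ^ Fintype.card (Fin m)) := by
    rw [Fintype.card_fin, ← pow_mul, ← Real.rpow_natCast, Real.sqrt_eq_rpow,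
      ← Real.rpow_mul (by norm_num)]
    push_cast
    ring_nf
  calc (2 : ℝ) ^ (3 * ((8 * m : ℕ) : ℝ) / 16) / (2 * Real.exp 1)
      ≤ (2 : ℝ) ^ (3 * ((8 * m : ℕ) : ℝ) / 16) :=
        div_le_self (by positivity) (by linarith [Real.add_one_le_exp 1])
    _ = √(((2 : ℝ) ^ 3) ^ Fintype.card (Fin m)) := hpow
    _ ≤ matDisc ((of chi).tensorPow (Fin m)) := sqrt_le_matDisc_of_transpose_mul_self_eq_smul hH
    _ ≤ matHerDisc (Gmat (8 * m)) :=
        hsub ▸ matDisc_submatrix_le_matHerDisc _ _ (blockCol_injective e)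

/-- For every positive integer `d` divisible by `8`,
`herdisc(G_d) ≥ 2^{3d/16} / (2e)`. -/
theorem Gmat_herdisc_lower_bound (d : ℕ) (hd : 0 < d) (h8 : 8 ∣ d) :
    (2 : ℝ) ^ (3 * (d : ℝ) / 16) / (2 * Real.exp 1) ≤ matHerDisc (Gmat d) :=
  Gmat_herdisc_lower_bound_general d h8
end

section
/- For every positive integer d divisible by 8, herdisc(G_d) ≤ 2^{d/8} · herdisc(S^d), where herdisc(G_d) is the hereditary discrepancy of the matrix G_d and herdisc(S^d) is the hereditary discrepancy of the set system of subcubes of the boolean cube {0,1}^d. -/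
/-- The discrepancy of a set system `S` on a finite ground set `U`:
`disc(S) = min_{f : U → {-1,+1}} max_{T ∈ S} |∑_{i ∈ T} f(i)|`. -/
noncomputable def sysDisc {U : Type*} [Fintype U] (S : Finset (Finset U)) : ℝ :=
  sInf {D : ℝ | ∃ f : U → ℝ, (∀ i, f i = 1 ∨ f i = -1) ∧
    D = ⨆ T : {T // T ∈ S}, |∑ i ∈ T.1, f i|}

/-- The hereditary discrepancy of a set system `S` on a finite ground set `U`:
`herdisc(S) = max_{W ⊆ U} disc(S|_W)`, where `S|_W = {T ∩ W : T ∈ S}`. -/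
noncomputable def sysHerDisc {U : Type*} [Fintype U] [DecidableEq U]
    (S : Finset (Finset U)) : ℝ :=
  sSup {D : ℝ | ∃ W : Finset U, D = sysDisc (S.image (fun T => T ∩ W))}

/-- For `v ∈ {0,1,*}^d` (where `*` is encoded as `none`), the subcube
`S_v = {u ∈ {0,1}^d : vᵢ ≠ * → uᵢ = vᵢ}`. -/
def subcube {d : ℕ} (v : Fin d → Option Bool) : Finset (Fin d → Bool) :=
  Finset.univ.filter (fun u => ∀ i : Fin d, ∀ b : Bool, v i = some b → u i = b)

/-- The set system `S^d` of all subcubes of the boolean cube `{0,1}^d`. -/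
def cubeSystem (d : ℕ) : Finset (Finset (Fin d → Bool)) :=
  Finset.univ.image (fun v : Fin d → Option Bool => subcube v)

/-!
Fix a row `χ_v` with `|v| = k` and a coloring `f` attaining `disc(S^d|_W)`. Grouping the points
of `W` by their restriction to the support of `v` splits `W` into `2^k` sets `S_p ∩ W`, with `p`
fixed on the support of `v` and `*` elsewhere, and `χ_v` is constant `±1` on each of them. So the
row sum is a signed sum of `2^k` subcube sums, each at most `disc(S^d|_W) ≤ herdisc(S^d)`.
-/

open Finset

section Discrepancy

variable {U : Type*} [Fintype U]

lemma sysDisc_nonneg (S : Finset (Finset U)) : 0 ≤ sysDisc S :=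
  le_csInf ⟨_, fun _ => 1, fun _ => Or.inl rfl, rfl⟩ fun _ ⟨_, _, hD⟩ =>
    hD ▸ Real.iSup_nonneg fun _ => abs_nonneg _

/-- The infimum defining `sysDisc` is attained, as only finitely many colorings exist. -/
lemma exists_coloring_abs_sum_le_sysDisc (S : Finset (Finset U)) :
    ∃ f : U → ℝ, (∀ i, f i = 1 ∨ f i = -1) ∧ ∀ T ∈ S, |∑ i ∈ T, f i| ≤ sysDisc S := by
  classical
  set values := {D : ℝ | ∃ f : U → ℝ, (∀ i, f i = 1 ∨ f i = -1) ∧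
    D = ⨆ T : {T // T ∈ S}, |∑ i ∈ T.1, f i|}
  have hne : values.Nonempty := ⟨_, fun _ => 1, fun _ => Or.inl rfl, rfl⟩
  have hfin : values.Finite := by
    refine (Set.finite_range fun g : U → Bool =>
      ⨆ T : {T // T ∈ S}, |∑ i ∈ T.1, if g i then (1 : ℝ) else -1|).subset ?_
    rintro D ⟨f, hf, rfl⟩
    refine Set.mem_range.2 ⟨fun i => decide (f i = 1), ?_⟩
    congr! with T i
    rcases hf i with h | h <;> norm_num [h]
  obtain ⟨f, hf, hD⟩ := hne.csInf_mem hfin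
  refine ⟨f, hf, fun T hT => ?_⟩
  rw [sysDisc, hD]
  exact le_ciSup (f := fun T : {T // T ∈ S} => |∑ i ∈ T.1, f i|)
    (Set.finite_range _).bddAbove ⟨T, hT⟩

lemma sysDisc_image_inter_le_sysHerDisc [DecidableEq U] (S : Finset (Finset U))
    (W : Finset U) : sysDisc (S.image (· ∩ W)) ≤ sysHerDisc S := by
  refine le_csSup (Set.Finite.bddAbove ?_) ⟨W, rfl⟩
  exact (Set.finite_range fun W => sysDisc (S.image (· ∩ W))).subset
    fun _ ⟨W, hW⟩ => ⟨W, hW.symm⟩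

lemma sysHerDisc_nonneg [DecidableEq U] (S : Finset (Finset U)) : 0 ≤ sysHerDisc S :=
  (sysDisc_nonneg _).trans (sysDisc_image_inter_le_sysHerDisc S ∅)

lemma matDisc_le_of_coloring {m n : Type*} [Fintype m] [Fintype n] (A : Matrix m n ℝ)
    (x : n → ℝ) (hx : ∀ i, x i = 1 ∨ x i = -1) {B : ℝ} (hB : 0 ≤ B)
    (hrow : ∀ j, |∑ i, A j i * x i| ≤ B) : matDisc A ≤ B := by
  refine le_trans ?_ (Real.iSup_le hrow hB)
  refine csInf_le ⟨0, ?_⟩ ⟨x, hx, rfl⟩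
  rintro _ ⟨_, _, rfl⟩
  exact Real.iSup_nonneg fun _ => abs_nonneg _

end Discrepancy

lemma abs_sum_comp_mul_le_card_mul {α κ : Type*} [Fintype κ] [DecidableEq κ]
    (W : Finset α) (r : α → κ) (σ : κ → ℝ) (hσ : ∀ a, |σ a| ≤ 1) (f : α → ℝ) {B : ℝ}
    (hB : ∀ a, |∑ u ∈ W with r u = a, f u| ≤ B) :
    |∑ u ∈ W, σ (r u) * f u| ≤ Fintype.card κ * B := by
  have hfiber : ∀ a, ∑ u ∈ W with r u = a, σ (r u) * f u = σ a * ∑ u ∈ W with r u = a, f u := by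
    intro a
    rw [mul_sum]
    exact sum_congr rfl fun u hu => by rw [(mem_filter.1 hu).2]
  rw [← sum_fiberwise W r]
  calc |∑ a, ∑ u ∈ W with r u = a, σ (r u) * f u|
      ≤ ∑ a, |σ a * ∑ u ∈ W with r u = a, f u| := by
        simpa only [hfiber] using abs_sum_le_sum_abs _ _
    _ ≤ ∑ _a : κ, B := sum_le_sum fun a _ => by
        rw [abs_mul]
        exact (mul_le_of_le_one_left (abs_nonneg _) (hσ a)).trans (hB a)
    _ = Fintype.card κ * B := by rw [sum_const, card_univ, nsmul_eq_mul]

section Subcube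

variable {d : ℕ} (v : Fin d → Bool)

def restrictSupport (u : Fin d → Bool) : {i // v i = true} → Bool := fun i => u i

def supportPattern (a : {i // v i = true} → Bool) : Fin d → Option Bool :=
  fun i => if h : v i = true then some (a ⟨i, h⟩) else none

lemma mem_subcube_supportPattern {a : {i // v i = true} → Bool} {u : Fin d → Bool} :
    u ∈ subcube (supportPattern v a) ↔ restrictSupport v u = a := by
  rw [subcube, mem_filter, funext_iff]
  simp only [mem_univ, true_and, supportPattern, restrictSupport, Subtype.forall]
  constructor
  · exact fun h i hi => h i _ (by simp [hi])
  · intro h i b hb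
    split_ifs at hb with hi
    exact Option.some_injective _ hb ▸ h i hi

lemma filter_restrictSupport_eq_subcube_inter (W : Finset (Fin d → Bool))
    (a : {i // v i = true} → Bool) :
    W.filter (restrictSupport v · = a) = subcube (supportPattern v a) ∩ W := by
  ext u
  rw [mem_filter, mem_inter, mem_subcube_supportPattern, and_comm]

lemma chi_eq_neg_one_pow_restrictSupport (u : Fin d → Bool) :
    chi v u = (-1 : ℝ) ^ #{i | restrictSupport v u i = true} := by
  rw [chi]
  congr 1
  symm
  refine card_bij (fun i _ => i.1) (fun i hi => ?_) (fun _ _ _ _ => Subtype.ext) fun j hj => ?_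
  · rw [mem_filter] at hi ⊢
    exact ⟨mem_univ _, i.2, hi.2⟩
  · rw [mem_filter] at hj
    exact ⟨⟨j, hj.2.1⟩, mem_filter.2 ⟨mem_univ _, hj.2.2⟩, rfl⟩

lemma card_restrictSupport_codomain : Fintype.card ({i // v i = true} → Bool) = 2 ^ wt v := by
  rw [Fintype.card_fun, Fintype.card_bool, Fintype.card_subtype, wt]

lemma abs_sum_chi_mul_le (W : Finset (Fin d → Bool)) (f : (Fin d → Bool) → ℝ) {B : ℝ}
    (hB : ∀ T ∈ cubeSystem d, |∑ u ∈ T ∩ W, f u| ≤ B) :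
    |∑ u ∈ W, chi v u * f u| ≤ 2 ^ wt v * B := by
  simp only [chi_eq_neg_one_pow_restrictSupport v]
  have hsign : ∀ a : {i // v i = true} → Bool, |(-1 : ℝ) ^ #{i | a i = true}| ≤ 1 := by
    simp
  have hfiber : ∀ a, |∑ u ∈ W with restrictSupport v u = a, f u| ≤ B := fun a => by
    rw [filter_restrictSupport_eq_subcube_inter]
    exact hB _ (mem_image_of_mem _ (mem_univ _))
  calc _ ≤ Fintype.card ({i // v i = true} → Bool) * B :=
        abs_sum_comp_mul_le_card_mul W (restrictSupport v) _ hsign f hfiber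
    _ = 2 ^ wt v * B := by rw [card_restrictSupport_codomain]; push_cast; rfl

end Subcube

theorem Gmat_herdisc_le_cubeSystem_herdisc_general (d : ℕ) :
    matHerDisc (Gmat d) ≤ (2 : ℝ) ^ ((d : ℝ) / 8) * sysHerDisc (cubeSystem d) := by
  have hpow : (2 : ℝ) ^ (d / 8) ≤ (2 : ℝ) ^ ((d : ℝ) / 8) := by
    rw [← Real.rpow_natCast]
    exact Real.rpow_le_rpow_of_exponent_le one_le_two (Nat.cast_div_le ..)
  have hH := sysHerDisc_nonneg (cubeSystem d)
  refine Real.sSup_le (fun _ ⟨W, hW⟩ => hW ▸ ?_) (by positivity)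
  obtain ⟨f, hf, hfW⟩ := exists_coloring_abs_sum_le_sysDisc ((cubeSystem d).image (· ∩ W))
  refine matDisc_le_of_coloring _ (fun u => f u.1) (fun u => hf u.1) (by positivity)
    fun ⟨v, hv⟩ => ?_
  calc |∑ u : W, chi v u.1 * f u.1| = |∑ u ∈ W, chi v u * f u| := by
          rw [← sum_coe_sort W]
    _ ≤ 2 ^ (d / 8) * sysDisc ((cubeSystem d).image (· ∩ W)) := by
        rw [← hv]
        exact abs_sum_chi_mul_le v W f fun T hT => hfW _ (mem_image_of_mem _ hT)
    _ ≤ (2 : ℝ) ^ ((d : ℝ) / 8) * sysHerDisc (cubeSystem d) :=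
        mul_le_mul hpow (sysDisc_image_inter_le_sysHerDisc _ W) (sysDisc_nonneg _)
          (by positivity)

/-- For every positive integer `d` divisible by `8`,
`herdisc(G_d) ≤ 2^{d/8} · herdisc(S^d)`. -/
theorem Gmat_herdisc_le_cubeSystem_herdisc (d : ℕ) (hd : 0 < d) (h8 : 8 ∣ d) :
    matHerDisc (Gmat d) ≤ (2 : ℝ) ^ ((d : ℝ) / 8) * sysHerDisc (cubeSystem d) :=
  Gmat_herdisc_le_cubeSystem_herdisc_general d
end

section
/- Let d be a positive integer divisible by 8, let p_{1,0} < p_{1,1} < … < p_{d,0} < p_{d,1} be the first 2d primes, and let B_d = {Π_{i=1}^d p_{i,u_i} : u ∈ {0,1}^d}. Then there exists a subset W ⊆ B_d such that for every f : W → {-1,+1} there is a positive integer a with |Σ_{b ∈ W, a ∣ b} f(b)| ≥ 2^{d/16}/(2e). In other words, the hereditary discrepancy of the set system of homogeneous arithmetic progressions (divisibility sets {b : a ∣ b}) restricted to B_d is at least 2^{d/16}/(2e). -/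
/-- The first `2d` primes in increasing order, organized into `d` consecutive
pairs: `p_{i,b}` is the `(2i + b)`-th prime (0-indexed), so
`p_{1,0} < p_{1,1} < … < p_{d,0} < p_{d,1}`. -/
noncomputable def pPrime {d : ℕ} (i : Fin d) (b : Bool) : ℕ :=
  Nat.nth Nat.Prime (2 * (i : ℕ) + if b then 1 else 0)

/-- For `u ∈ {0,1}^d`, the squarefree integer `b_u = ∏_{i=1}^d p_{i, uᵢ}`. -/
noncomputable def bOf {d : ℕ} (u : Fin d → Bool) : ℕ :=
  ∏ i : Fin d, pPrime i (u i)

/-- The set `B_d = {∏_{i=1}^d p_{i,uᵢ} : u ∈ {0,1}^d}`. -/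
noncomputable def Bset (d : ℕ) : Finset ℕ :=
  Finset.univ.image (fun u : Fin d → Bool => bOf u)

/-!
Write `d = 8m` and embed `[8]^m` into `B_d` by one-hot encoding: `v` goes to `b_u` with
`u_{(j,a)} = [v_j = a]`. For a combinatorial rectangle `C_1 × ⋯ × C_m`, the product of the primes
`p_{(j,a),0}` with `a ∉ C_j` divides `b_u` exactly when `v` lies in the rectangle, so rectangle sums
are sums over homogeneous progressions. For a single coordinate,
`∑_{c ⊆ α} (∑_{i ∈ c} y_i)² = 2^{|α|-2} (∑ y_i² + (∑ y_i)²) ≥ 2^{|α|-2} ∑ y_i²`; this tensorises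
over the `m` coordinates, so for a `±1` function on `α^m` the mean squared rectangle sum is at
least `(|α| / 4)^m`. For `|α| = 8` some rectangle sum has absolute value at least
`2^{m/2} = 2^{d/16}`.
-/

open Finset

lemma Fin.sum_univ_fun_succ {α M : Type*} [Fintype α] [AddCommMonoid M] {m : ℕ}
    (g : (Fin (m + 1) → α) → M) : ∑ v, g v = ∑ a, ∑ v : Fin m → α, g (Fin.cons a v) := by
  rw [← (Fin.consEquiv fun _ => α).sum_comp, Fintype.sum_prod_type]
  rfl

section Powerset

variable {α : Type*} [DecidableEq α]

lemma two_mul_sum_powerset_sum (s : Finset α) (y : α → ℝ) :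
    2 * ∑ c ∈ s.powerset, ∑ i ∈ c, y i = 2 ^ #s * ∑ i ∈ s, y i := by
  induction s using Finset.induction_on with
  | empty => simp
  | insert a s ha ih =>
    have hins : ∀ c ∈ s.powerset, ∑ i ∈ insert a c, y i = y a + ∑ i ∈ c, y i := fun c hc =>
      sum_insert fun hac => ha (mem_powerset.mp hc hac)
    rw [sum_powerset_insert ha, sum_congr rfl hins, sum_add_distrib, sum_const, card_powerset,
      card_insert_of_notMem ha, sum_insert ha, nsmul_eq_mul]
    push_cast
    linear_combination 2 * ih

lemma four_mul_sum_powerset_sq_sum (s : Finset α) (y : α → ℝ) :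
    4 * ∑ c ∈ s.powerset, (∑ i ∈ c, y i) ^ 2 =
      2 ^ #s * (∑ i ∈ s, y i ^ 2 + (∑ i ∈ s, y i) ^ 2) := by
  induction s using Finset.induction_on with
  | empty => simp
  | insert a s ha ih =>
    have hins : ∀ c ∈ s.powerset, (∑ i ∈ insert a c, y i) ^ 2 =
        (∑ i ∈ c, y i) ^ 2 + 2 * y a * ∑ i ∈ c, y i + y a ^ 2 := fun c hc => by
      rw [sum_insert fun hac => ha (mem_powerset.mp hc hac)]
      ring
    rw [sum_powerset_insert ha, sum_congr rfl hins, sum_add_distrib, sum_add_distrib, ← mul_sum,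
      sum_const, card_powerset, card_insert_of_notMem ha, sum_insert ha, sum_insert ha,
      nsmul_eq_mul]
    push_cast
    linear_combination 2 * ih + 4 * y a * two_mul_sum_powerset_sum s y

end Powerset

section Rectangles

variable {α : Type*} [Fintype α] [DecidableEq α]

def rectSum {m : ℕ} (x : (Fin m → α) → ℝ) (C : Fin m → Finset α) : ℝ :=
  ∑ v ∈ Fintype.piFinset C, x v

lemma rectSum_cons {m : ℕ} (x : (Fin (m + 1) → α) → ℝ) (c : Finset α) (C : Fin m → Finset α) :
    rectSum x (Fin.cons c C) = ∑ a ∈ c, rectSum (fun v => x (Fin.cons a v)) C := by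
  rw [rectSum, ← Fintype.sum_ite_mem, Fin.sum_univ_fun_succ, ← Fintype.sum_ite_mem c]
  refine Fintype.sum_congr _ _ fun a => ?_
  simp only [Fin.cons_mem_piFinset_cons, ite_and]
  split_ifs
  · exact Fintype.sum_ite_mem _ _
  · exact sum_const_zero

theorem pow_mul_sum_sq_le_sum_rectSum_sq {l : ℝ} (hl : 0 ≤ l)
    (hdim1 : ∀ y : α → ℝ, l * ∑ a, y a ^ 2 ≤ ∑ c : Finset α, (∑ a ∈ c, y a) ^ 2) (m : ℕ)
    (x : (Fin m → α) → ℝ) :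
    l ^ m * ∑ v, x v ^ 2 ≤ ∑ C : Fin m → Finset α, rectSum x C ^ 2 := by
  induction m with
  | zero => simp [rectSum, Unique.eq_default]
  | succ m ih =>
    calc l ^ (m + 1) * ∑ v, x v ^ 2
        = l * ∑ a, l ^ m * ∑ v, x (Fin.cons a v) ^ 2 := by
          rw [Fin.sum_univ_fun_succ, mul_sum, mul_sum, pow_succ']; simp only [mul_assoc]
      _ ≤ l * ∑ a, ∑ C, rectSum (fun v => x (Fin.cons a v)) C ^ 2 := by
          gcongr with a; exact ih _
      _ = ∑ C, l * ∑ a, rectSum (fun v => x (Fin.cons a v)) C ^ 2 := by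
          rw [sum_comm, mul_sum]
      _ ≤ ∑ C, ∑ c : Finset α, (∑ a ∈ c, rectSum (fun v => x (Fin.cons a v)) C) ^ 2 := by
          gcongr with C; exact hdim1 _
      _ = ∑ C : Fin (m + 1) → Finset α, rectSum x C ^ 2 := by
          rw [Fin.sum_univ_fun_succ, sum_comm]; simp only [rectSum_cons]

theorem exists_card_div_four_pow_le_rectSum_sq {m : ℕ} (x : (Fin m → α) → ℝ) (hx : ∀ v, x v ^ 2 = 1) :
    ∃ C : Fin m → Finset α, ((Fintype.card α : ℝ) / 4) ^ m ≤ rectSum x C ^ 2 := by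
  have hdim1 (y : α → ℝ) :
      2 ^ Fintype.card α / 4 * ∑ a, y a ^ 2 ≤ ∑ c : Finset α, (∑ a ∈ c, y a) ^ 2 := by
    have := four_mul_sum_powerset_sq_sum univ y
    rw [powerset_univ, card_univ] at this
    nlinarith [mul_nonneg (pow_nonneg zero_le_two (Fintype.card α)) (sq_nonneg (∑ a, y a))]
  have hsum := pow_mul_sum_sq_le_sum_rectSum_sq (by positivity) hdim1 m x
  simp only [hx, sum_const, card_univ, Fintype.card_fun, Fintype.card_fin, nsmul_eq_mul, mul_one,
    Nat.cast_pow] at hsum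
  have hconst : ∑ _C : Fin m → Finset α, ((Fintype.card α : ℝ) / 4) ^ m =
      (2 ^ Fintype.card α / 4) ^ m * (Fintype.card α : ℝ) ^ m := by
    rw [sum_const, card_univ, Fintype.card_fun, Fintype.card_finset, Fintype.card_fin,
      nsmul_eq_mul]
    push_cast
    rw [div_pow, div_pow, ← pow_mul, mul_comm (Fintype.card α) m, pow_mul]
    field_simp
  obtain ⟨C, -, hC⟩ := exists_le_of_sum_le univ_nonempty (hconst.trans_le hsum)
  exact ⟨C, hC⟩

end Rectangles

lemma pPrime_prime {d : ℕ} (k : Fin d) (c : Bool) : (pPrime k c).Prime :=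
  Nat.prime_nth_prime _

lemma pPrime_inj {d : ℕ} {k k' : Fin d} {c c' : Bool} :
    pPrime k c = pPrime k' c' ↔ k = k' ∧ c = c' := by
  refine ⟨fun h => ?_, fun h => h.1 ▸ h.2 ▸ rfl⟩
  have h := Nat.nth_injective Nat.infinite_setOfPred_prime h
  rw [Fin.ext_iff]
  cases c <;> cases c' <;> simp at h ⊢ <;> omega

lemma pPrime_dvd_bOf_iff {d : ℕ} (k : Fin d) (c : Bool) (u : Fin d → Bool) :
    pPrime k c ∣ bOf u ↔ u k = c := by
  rw [bOf, (pPrime_prime k c).prime.dvd_finsetProd_iff]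
  simp only [mem_univ, true_and, Nat.prime_dvd_prime_iff_eq (pPrime_prime _ _) (pPrime_prime _ _),
    pPrime_inj]
  exact ⟨fun ⟨_, hk, hc⟩ => hk ▸ hc.symm, fun h => ⟨k, rfl, h.symm⟩⟩

lemma bOf_injective {d : ℕ} : Function.Injective (bOf (d := d)) := fun u u' h =>
  funext fun k => ((pPrime_dvd_bOf_iff k (u k) u').mp (h ▸ (pPrime_dvd_bOf_iff k _ u).mpr rfl)).symm

lemma prod_pPrime_false_dvd_bOf_iff {d : ℕ} (s : Finset (Fin d)) (u : Fin d → Bool) :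
    (∏ k ∈ s, pPrime k false) ∣ bOf u ↔ ∀ k ∈ s, u k = false := by
  refine ⟨fun h k hk => (pPrime_dvd_bOf_iff k false u).mp
    ((dvd_prod_of_mem (fun k => pPrime k false) hk).trans h), fun h => ?_⟩
  rw [prod_congr rfl fun k hk => congrArg (pPrime k) (h k hk).symm]
  exact prod_dvd_prod_of_subset s univ _ (subset_univ s)

section OneHot

variable {α : Type*} [DecidableEq α] {d m : ℕ} (e : Fin d ≃ Fin m × α)

def oneHot (v : Fin m → α) : Fin d → Bool :=
  fun k => decide ((e k).2 = v (e k).1)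

lemma oneHot_injective : Function.Injective (oneHot e) := by
  intro v v' h
  funext j
  have := congrFun h (e.symm (j, v j))
  simpa [oneHot] using this

noncomputable def oneHotSet [Fintype α] : Finset ℕ :=
  univ.image fun v => bOf (oneHot e v)

lemma oneHotSet_subset_Bset [Fintype α] : oneHotSet e ⊆ Bset d :=
  image_subset_iff.mpr fun _ _ => mem_image_of_mem _ (mem_univ _)

noncomputable def rectDivisor (C : Fin m → Finset α) : ℕ :=
  ∏ k ∈ univ.filter (fun k => (e k).2 ∉ C (e k).1), pPrime k false

lemma rectDivisor_pos (C : Fin m → Finset α) : 0 < rectDivisor e C :=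
  prod_pos fun k _ => (pPrime_prime k false).pos

lemma rectDivisor_dvd_bOf_oneHot_iff (C : Fin m → Finset α) (v : Fin m → α) :
    rectDivisor e C ∣ bOf (oneHot e v) ↔ v ∈ Fintype.piFinset C := by
  rw [rectDivisor, prod_pPrime_false_dvd_bOf_iff, Fintype.mem_piFinset]
  simp only [mem_filter, mem_univ, true_and, oneHot, decide_eq_false_iff_not]
  rw [e.forall_congr_left]
  simp only [Equiv.apply_symm_apply, Prod.forall]
  refine forall_congr' fun j => ⟨fun h => by_contra fun hv => h _ hv rfl, ?_⟩
  exact fun h a ha hav => ha (hav ▸ h)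

lemma filter_rectDivisor_dvd_oneHotSet [Fintype α] (C : Fin m → Finset α) :
    (oneHotSet e).filter (rectDivisor e C ∣ ·) =
      (Fintype.piFinset C).image fun v => bOf (oneHot e v) := by
  rw [oneHotSet, filter_image]
  congr 1
  ext v
  simp only [mem_filter, mem_univ, true_and, rectDivisor_dvd_bOf_oneHot_iff]

theorem exists_card_div_four_pow_le_sq_sum_filter_dvd [Fintype α] (f : ℕ → ℝ)
    (hf : ∀ b ∈ oneHotSet e, f b = 1 ∨ f b = -1) :
    ∃ a : ℕ, 0 < a ∧
      ((Fintype.card α : ℝ) / 4) ^ m ≤ (∑ b ∈ (oneHotSet e).filter (a ∣ ·), f b) ^ 2 := by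
  have hx (v : Fin m → α) : f (bOf (oneHot e v)) ^ 2 = 1 := by
    rcases hf _ (mem_image_of_mem _ (mem_univ v)) with h | h <;> simp [h]
  obtain ⟨C, hC⟩ := exists_card_div_four_pow_le_rectSum_sq _ hx
  refine ⟨rectDivisor e C, rectDivisor_pos e C, ?_⟩
  rwa [filter_rectDivisor_dvd_oneHotSet,
    sum_image fun v _ w _ h => oneHot_injective e (bOf_injective h)]

end OneHot

theorem HAP_herdisc_on_Bset_general (d : ℕ) (h8 : 8 ∣ d) :
    ∃ W : Finset ℕ, W ⊆ Bset d ∧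
      ∀ f : ℕ → ℝ, (∀ b ∈ W, f b = 1 ∨ f b = -1) →
        ∃ a : ℕ, 0 < a ∧
          (2 : ℝ) ^ ((d : ℝ) / 16) / (2 * Real.exp 1) ≤
            |∑ b ∈ W.filter (fun b => a ∣ b), f b| := by
  obtain ⟨m, rfl⟩ := h8
  let e : Fin (8 * m) ≃ Fin m × Fin 8 := finProdFinEquiv.symm.trans (Equiv.prodComm _ _)
  refine ⟨oneHotSet e, oneHotSet_subset_Bset e, fun f hf => ?_⟩
  obtain ⟨a, ha, hsq⟩ := exists_card_div_four_pow_le_sq_sum_filter_dvd e f hf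
  refine ⟨a, ha, ?_⟩
  rw [Fintype.card_fin, show ((8 : ℕ) : ℝ) / 4 = 2 by norm_num] at hsq
  calc (2 : ℝ) ^ (((8 * m : ℕ) : ℝ) / 16) / (2 * Real.exp 1)
      ≤ (2 : ℝ) ^ (((8 * m : ℕ) : ℝ) / 16) :=
        div_le_self (by positivity) (by linarith [Real.add_one_le_exp 1])
    _ = √(2 ^ m) := by
        rw [Real.sqrt_eq_rpow, ← Real.rpow_natCast, ← Real.rpow_mul zero_le_two]
        push_cast
        ring_nf
    _ ≤ |∑ b ∈ (oneHotSet e).filter (a ∣ ·), f b| :=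
        (Real.sqrt_le_sqrt hsq).trans_eq (Real.sqrt_sq_eq_abs _)

/-- For every positive integer `d` divisible by `8`, there is
a subset `W ⊆ B_d` such that for every `f : W → {-1,+1}` there is a positive
integer `a` with `|∑_{b ∈ W, a ∣ b} f(b)| ≥ 2^{d/16}/(2e)`; i.e. the hereditary
discrepancy of homogeneous arithmetic progressions restricted to `B_d` is at
least `2^{d/16}/(2e)`. -/
theorem HAP_herdisc_on_Bset (d : ℕ) (hd : 0 < d) (h8 : 8 ∣ d) :
    ∃ W : Finset ℕ, W ⊆ Bset d ∧
      ∀ f : ℕ → ℝ, (∀ b ∈ W, f b = 1 ∨ f b = -1) →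
        ∃ a : ℕ, 0 < a ∧
          (2 : ℝ) ^ ((d : ℝ) / 16) / (2 * Real.exp 1) ≤
            |∑ b ∈ W.filter (fun b => a ∣ b), f b| :=
  HAP_herdisc_on_Bset_general d h8
end
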